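/- arXiv:1308.6548 — 3 statements merged into one kernel-verified Lean document; each statement's English description precedes it below -/
import Mathlib

section
/- Back-and-forth property for glued metrics: let $A' \subseteq A$ and $B$ be subsets with $A' \cup B = A \cup B = C$, and let $d_{A'}, d_B$ be compatible pseudometrics on $A', B$. Then $g(d_{A'}, d_B) = g(g(d_{A'}, d_B)|_A,\ d_B)$ as functions on $C \times C$. -/
open ENNReal

/-- A pseudometric (with values in `[0,∞]`) on a subset `A` of `X`. -/
def IsPseudometricOn {X : Type} (A : Set X) (d : X → X → ℝ≥0∞) : Prop :=
  (∀ x ∈ A, d x x = 0) ∧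
  (∀ x ∈ A, ∀ y ∈ A, d x y = d y x) ∧
  (∀ x ∈ A, ∀ y ∈ A, ∀ z ∈ A, d x z ≤ d x y + d y z)

open Classical in
/-- The gluing of two compatible pseudometrics via shortest paths through the
intersection. -/
noncomputable def glueDist {X : Type} (U V : Set X) (dU dV : X → X → ℝ≥0∞)
    (x z : X) : ℝ≥0∞ :=
  if x ∈ U ∧ z ∈ U then dU x z
  else if x ∈ V ∧ z ∈ V then dV x z
  else if x ∈ U then ⨅ y ∈ U ∩ V, (dU x y + dV y z)
  else ⨅ y ∈ U ∩ V, (dV x y + dU y z)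

/-!
A point of `A \ A'` lies in `B`, so a path from `x ∈ A' \ B` to `z ∈ B \ A` through such a
point `y` consists of a glued path from `x` to `y` followed by a `B`-step from `y` to `z`.
The glued path from `x` to `y` already enters `B` at some `w ∈ A' ∩ B`, and by the triangle
inequality in `B` the path jumping from `w` straight to `z` is no longer. Hence passing through
`A ∩ B` instead of `A' ∩ B` does not shorten any path; on `A` and on `B` both gluings simply
return the given distances.
-/

section Gluing

variable {X : Type} {U V : Set X} {dU dV : X → X → ℝ≥0∞} {x y z : X}

theorem glueDist_of_mem_left (hx : x ∈ U) (hz : z ∈ U) :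
    glueDist U V dU dV x z = dU x z := by
  simp [glueDist, hx, hz]

theorem glueDist_of_mem_right (hcompat : ∀ w ∈ U ∩ V, ∀ w' ∈ U ∩ V, dU w w' = dV w w')
    (hx : x ∈ V) (hz : z ∈ V) : glueDist U V dU dV x z = dV x z := by
  by_cases hU : x ∈ U ∧ z ∈ U
  · rw [glueDist_of_mem_left hU.1 hU.2]
    exact hcompat x ⟨hU.1, hx⟩ z ⟨hU.2, hz⟩
  · simp [glueDist, hU, hx, hz]

theorem glueDist_of_mem_of_notMem (hx : x ∈ U) (hz : z ∉ U) (hxV : x ∉ V) :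
    glueDist U V dU dV x z = ⨅ y ∈ U ∩ V, (dU x y + dV y z) := by
  simp [glueDist, hx, hz, hxV]

theorem glueDist_of_notMem_of_mem (hx : x ∉ U) (hz : z ∈ U) (hzV : z ∉ V) :
    glueDist U V dU dV x z = ⨅ y ∈ U ∩ V, (dV x y + dU y z) := by
  simp [glueDist, hx, hz, hzV]

theorem iInf_add_le_glueDist_add
    (htri : ∀ a ∈ V, ∀ b ∈ V, ∀ c ∈ V, dV a c ≤ dV a b + dV b c)
    (hx : x ∈ U) (hxV : x ∉ V) (hy : y ∈ V) (hz : z ∈ V) :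
    ⨅ w ∈ U ∩ V, (dU x w + dV w z) ≤ glueDist U V dU dV x y + dV y z := by
  by_cases hyU : y ∈ U
  · rw [glueDist_of_mem_left hx hyU]
    exact iInf₂_le y ⟨hyU, hy⟩
  · simp_rw [glueDist_of_mem_of_notMem hx hyU hxV, ENNReal.iInf_add]
    refine le_iInf₂ fun w hw => ?_
    calc ⨅ w ∈ U ∩ V, (dU x w + dV w z) ≤ dU x w + dV w z := iInf₂_le w hw
      _ ≤ dU x w + (dV w y + dV y z) := by gcongr; exact htri w hw.2 y hy z hz
      _ = dU x w + dV w y + dV y z := (add_assoc _ _ _).symm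

theorem iInf_add_le_add_glueDist
    (htri : ∀ a ∈ V, ∀ b ∈ V, ∀ c ∈ V, dV a c ≤ dV a b + dV b c)
    (hx : x ∈ V) (hy : y ∈ V) (hz : z ∈ U) (hzV : z ∉ V) :
    ⨅ w ∈ U ∩ V, (dV x w + dU w z) ≤ dV x y + glueDist U V dU dV y z := by
  by_cases hyU : y ∈ U
  · rw [glueDist_of_mem_left hyU hz]
    exact iInf₂_le y ⟨hyU, hy⟩
  · simp_rw [glueDist_of_notMem_of_mem hyU hz hzV, ENNReal.add_iInf]
    refine le_iInf₂ fun w hw => ?_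
    calc ⨅ w ∈ U ∩ V, (dV x w + dU w z) ≤ dV x w + dU w z := iInf₂_le w hw
      _ ≤ dV x y + dV y w + dU w z := by gcongr; exact htri x hx y hy w hw.2
      _ = dV x y + (dV y w + dU w z) := add_assoc _ _ _

theorem iInf_glueDist_add_eq
    (htri : ∀ a ∈ V, ∀ b ∈ V, ∀ c ∈ V, dV a c ≤ dV a b + dV b c)
    {A : Set X} (hUA : U ⊆ A) (hx : x ∈ U) (hxV : x ∉ V) (hz : z ∈ V) :
    ⨅ y ∈ A ∩ V, (glueDist U V dU dV x y + dV y z) = ⨅ y ∈ U ∩ V, (dU x y + dV y z) := by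
  refine le_antisymm (le_iInf₂ fun y hy => ?_) (le_iInf₂ fun y hy => ?_)
  · refine (iInf₂_le y ⟨hUA hy.1, hy.2⟩).trans_eq ?_
    rw [glueDist_of_mem_left hx hy.1]
  · exact iInf_add_le_glueDist_add htri hx hxV hy.2 hz

theorem iInf_add_glueDist_eq
    (htri : ∀ a ∈ V, ∀ b ∈ V, ∀ c ∈ V, dV a c ≤ dV a b + dV b c)
    {A : Set X} (hUA : U ⊆ A) (hx : x ∈ V) (hz : z ∈ U) (hzV : z ∉ V) :
    ⨅ y ∈ A ∩ V, (dV x y + glueDist U V dU dV y z) = ⨅ y ∈ U ∩ V, (dV x y + dU y z) := by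
  refine le_antisymm (le_iInf₂ fun y hy => ?_) (le_iInf₂ fun y hy => ?_)
  · refine (iInf₂_le y ⟨hUA hy.1, hy.2⟩).trans_eq ?_
    rw [glueDist_of_mem_left hy.1 hz]
  · exact iInf_add_le_add_glueDist htri hx hy.2 hz hzV

end Gluing

theorem glueDist_back_and_forth_general {X : Type} (A' A B : Set X)
    (dA' dB : X → X → ℝ≥0∞)
    (hA'A : A' ⊆ A) (hUnion : A' ∪ B = A ∪ B)
    (hB : IsPseudometricOn B dB)
    (hcompat : ∀ w ∈ A' ∩ B, ∀ w' ∈ A' ∩ B, dA' w w' = dB w w') :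
    ∀ x ∈ A ∪ B, ∀ z ∈ A ∪ B,
      glueDist A' B dA' dB x z
        = glueDist A B (glueDist A' B dA' dB) dB x z := by
  intro x hx z hz
  by_cases hAA : x ∈ A ∧ z ∈ A
  · exact (glueDist_of_mem_left hAA.1 hAA.2).symm
  by_cases hBB : x ∈ B ∧ z ∈ B
  · have hcompat' : ∀ w ∈ A ∩ B, ∀ w' ∈ A ∩ B, glueDist A' B dA' dB w w' = dB w w' :=
      fun w hw w' hw' => glueDist_of_mem_right hcompat hw.2 hw'.2
    rw [glueDist_of_mem_right hcompat hBB.1 hBB.2, glueDist_of_mem_right hcompat' hBB.1 hBB.2]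
  by_cases hxA : x ∈ A
  · have hzA : z ∉ A := fun h => hAA ⟨hxA, h⟩
    have hzB : z ∈ B := hz.resolve_left hzA
    have hxB : x ∉ B := fun h => hBB ⟨h, hzB⟩
    have hxA' : x ∈ A' := (hUnion.ge hx).resolve_right hxB
    rw [glueDist_of_mem_of_notMem hxA' (fun h => hzA (hA'A h)) hxB,
      glueDist_of_mem_of_notMem hxA hzA hxB, iInf_glueDist_add_eq hB.2.2 hA'A hxA' hxB hzB]
  · have hxB : x ∈ B := hx.resolve_left hxA
    have hzB : z ∉ B := fun h => hBB ⟨hxB, h⟩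
    have hzA' : z ∈ A' := (hUnion.ge hz).resolve_right hzB
    rw [glueDist_of_notMem_of_mem (fun h => hxA (hA'A h)) hzA' hzB,
      glueDist_of_notMem_of_mem hxA (hA'A hzA') hzB, iInf_add_glueDist_eq hB.2.2 hA'A hxB hzA' hzB]

/-- back-and-forth property for glued pseudometrics. -/
theorem glueDist_back_and_forth {X : Type} (A' A B : Set X)
    (dA' dB : X → X → ℝ≥0∞)
    (hA'A : A' ⊆ A) (hUnion : A' ∪ B = A ∪ B)
    (hA' : IsPseudometricOn A' dA') (hB : IsPseudometricOn B dB)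
    (hcompat : ∀ w ∈ A' ∩ B, ∀ w' ∈ A' ∩ B, dA' w w' = dB w w') :
    ∀ x ∈ A ∪ B, ∀ z ∈ A ∪ B,
      glueDist A' B dA' dB x z
        = glueDist A B (glueDist A' B dA' dB) dB x z :=
  glueDist_back_and_forth_general A' A B dA' dB hA'A hUnion hB hcompat
end

section
/- In any compository, the source and target conditions hold: for a $k$-composable pair $(A,B) \in \mathcal{C}(m) \times \mathcal{C}(n)$, one has $(A \circ_k B)s_m = A$ and $(A \circ_k B)t_n = B$. -/
open CategoryTheory Opposite

namespace Compo

/-- The object `[n]` of the simplex category. -/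
abbrev sobj (n : ℕ) : SimplexCategory := SimplexCategory.mk n

/-- The "initial face" map `s_k : [k] → [n]`, `v ↦ v`. -/
def srcHom (k n : ℕ) (h : k ≤ n) : sobj k ⟶ sobj n :=
  SimplexCategory.mkHom
    ⟨fun v => ⟨v.1, by have := v.isLt; omega⟩, fun a b hab => Fin.mk_le_mk.mpr hab⟩

/-- The "terminal face" map `t_k : [k] → [n]`, `v ↦ v + n - k`. -/
def tgtHom (k n : ℕ) (h : k ≤ n) : sobj k ⟶ sobj n :=
  SimplexCategory.mkHom
    ⟨fun v => ⟨v.1 + (n - k), by have := v.isLt; omega⟩, fun a b hab => by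
      simp only [Fin.le_def] at hab ⊢; omega⟩

/-- A compository: a simplicial set equipped with compositions of `k`-composable
pairs, satisfying the identity axiom, the back-and-forth axiom, and compatibility
with degeneracy and face maps. The dimension `N` of the composite satisfies
`m + n = N + k`. -/
structure Compository where
  X : SSet.{0}
  comp : ∀ {m n k N : ℕ} (hm : k ≤ m) (hn : k ≤ n) (_ : m + n = N + k)
    (A : X.obj (op (sobj m))) (B : X.obj (op (sobj n))),
    X.map (tgtHom k m hm).op A = X.map (srcHom k n hn).op B → X.obj (op (sobj N))
  /-- Identity axiom: `As_k ∘_k A = A`. -/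
  id_left : ∀ {m k : ℕ} (hm : k ≤ m) (A : X.obj (op (sobj m))) h,
    comp (le_refl k) hm (by omega) (X.map (srcHom k m hm).op A) A h = A
  /-- Identity axiom: `A ∘_k At_k = A`. -/
  id_right : ∀ {m k : ℕ} (hm : k ≤ m) (A : X.obj (op (sobj m))) h,
    comp hm (le_refl k) (by omega) A (X.map (tgtHom k m hm).op A) h = A
  /-- Back-and-forth axiom: `(A ∘_k B)s_{m+i} ∘_{k+i} B = A ∘_k B` for `i ≤ n - k`. -/
  back_forth_left : ∀ {m n k N : ℕ} (hm : k ≤ m) (hn : k ≤ n) (hN : m + n = N + k)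
    (i : ℕ) (hi : i ≤ n - k)
    (A : X.obj (op (sobj m))) (B : X.obj (op (sobj n)))
    (hAB : X.map (tgtHom k m hm).op A = X.map (srcHom k n hn).op B)
    (h : X.map (tgtHom (k + i) (m + i) (by omega)).op
      (X.map (srcHom (m + i) N (by omega)).op (comp hm hn hN A B hAB))
      = X.map (srcHom (k + i) n (by omega)).op B),
    comp (show k + i ≤ m + i by omega) (show k + i ≤ n by omega)
      (show (m + i) + n = N + (k + i) by omega)
      (X.map (srcHom (m + i) N (by omega)).op (comp hm hn hN A B hAB)) B h
    = comp hm hn hN A B hAB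
  /-- Back-and-forth axiom: `A ∘_{k+j} (A ∘_k B)t_{n+j} = A ∘_k B` for `j ≤ m - k`. -/
  back_forth_right : ∀ {m n k N : ℕ} (hm : k ≤ m) (hn : k ≤ n) (hN : m + n = N + k)
    (j : ℕ) (hj : j ≤ m - k)
    (A : X.obj (op (sobj m))) (B : X.obj (op (sobj n)))
    (hAB : X.map (tgtHom k m hm).op A = X.map (srcHom k n hn).op B)
    (h : X.map (tgtHom (k + j) m (by omega)).op A
      = X.map (srcHom (k + j) (n + j) (by omega)).op
        (X.map (tgtHom (n + j) N (by omega)).op (comp hm hn hN A B hAB))),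
    comp (show k + j ≤ m by omega) (show k + j ≤ n + j by omega)
      (show m + (n + j) = N + (k + j) by omega)
      A (X.map (tgtHom (n + j) N (by omega)).op (comp hm hn hN A B hAB)) h
    = comp hm hn hN A B hAB
  /-- `(A ∘_k B)η_i = Aη_i ∘_k B` for `i ≤ m - k`. -/
  comp_eta_low : ∀ {m n k N : ℕ} (hm : k ≤ m) (hn : k ≤ n) (hN : m + n = N + k)
    (i : ℕ) (hi : i ≤ m - k)
    (A : X.obj (op (sobj m))) (B : X.obj (op (sobj n)))
    (hAB : X.map (tgtHom k m hm).op A = X.map (srcHom k n hn).op B)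
    (h : X.map (tgtHom k (m + 1) (by omega)).op
      (X.map (SimplexCategory.σ (⟨i, by omega⟩ : Fin (m + 1))).op A)
      = X.map (srcHom k n hn).op B),
    X.map (SimplexCategory.σ (⟨i, by omega⟩ : Fin (N + 1))).op (comp hm hn hN A B hAB)
    = comp (show k ≤ m + 1 by omega) hn (show (m + 1) + n = (N + 1) + k by omega)
        (X.map (SimplexCategory.σ (⟨i, by omega⟩ : Fin (m + 1))).op A) B h
  /-- `(A ∘_k B)η_i = A ∘_k Bη_{i-m+k}` for `i ≥ m`. -/
  comp_eta_high : ∀ {m n k N : ℕ} (hm : k ≤ m) (hn : k ≤ n) (hN : m + n = N + k)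
    (i : ℕ) (hi1 : m ≤ i) (hi2 : i ≤ N)
    (A : X.obj (op (sobj m))) (B : X.obj (op (sobj n)))
    (hAB : X.map (tgtHom k m hm).op A = X.map (srcHom k n hn).op B)
    (h : X.map (tgtHom k m hm).op A
      = X.map (srcHom k (n + 1) (by omega)).op
        (X.map (SimplexCategory.σ (⟨i - m + k, by omega⟩ : Fin (n + 1))).op B)),
    X.map (SimplexCategory.σ (⟨i, by omega⟩ : Fin (N + 1))).op (comp hm hn hN A B hAB)
    = comp hm (show k ≤ n + 1 by omega) (show m + (n + 1) = (N + 1) + k by omega)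
        A (X.map (SimplexCategory.σ (⟨i - m + k, by omega⟩ : Fin (n + 1))).op B) h
  /-- `(A ∘_k B)η_i = Aη_i ∘_{k+1} Bη_{i-m+k}` for `m - k ≤ i ≤ m`. -/
  comp_eta_mid : ∀ {m n k N : ℕ} (hm : k ≤ m) (hn : k ≤ n) (hN : m + n = N + k)
    (i : ℕ) (hi1 : m - k ≤ i) (hi2 : i ≤ m)
    (A : X.obj (op (sobj m))) (B : X.obj (op (sobj n)))
    (hAB : X.map (tgtHom k m hm).op A = X.map (srcHom k n hn).op B)
    (h : X.map (tgtHom (k + 1) (m + 1) (by omega)).op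
      (X.map (SimplexCategory.σ (⟨i, by omega⟩ : Fin (m + 1))).op A)
      = X.map (srcHom (k + 1) (n + 1) (by omega)).op
        (X.map (SimplexCategory.σ (⟨i - m + k, by omega⟩ : Fin (n + 1))).op B)),
    X.map (SimplexCategory.σ (⟨i, by omega⟩ : Fin (N + 1))).op (comp hm hn hN A B hAB)
    = comp (show k + 1 ≤ m + 1 by omega) (show k + 1 ≤ n + 1 by omega)
        (show (m + 1) + (n + 1) = (N + 1) + (k + 1) by omega)
        (X.map (SimplexCategory.σ (⟨i, by omega⟩ : Fin (m + 1))).op A)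
        (X.map (SimplexCategory.σ (⟨i - m + k, by omega⟩ : Fin (n + 1))).op B) h
  /-- `(A ∘_k B)∂_i = A∂_i ∘_k B` for `i < m - k` (here `A` is an `(m+1)`-simplex). -/
  comp_delta_low : ∀ {m n k N : ℕ} (hm : k ≤ m + 1) (hn : k ≤ n)
    (hN : (m + 1) + n = (N + 1) + k)
    (i : ℕ) (hi : i < m + 1 - k)
    (A : X.obj (op (sobj (m + 1)))) (B : X.obj (op (sobj n)))
    (hAB : X.map (tgtHom k (m + 1) hm).op A = X.map (srcHom k n hn).op B)
    (h : X.map (tgtHom k m (by omega)).op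
      (X.map (SimplexCategory.δ (⟨i, by omega⟩ : Fin (m + 2))).op A)
      = X.map (srcHom k n hn).op B),
    X.map (SimplexCategory.δ (⟨i, by omega⟩ : Fin (N + 2))).op (comp hm hn hN A B hAB)
    = comp (show k ≤ m by omega) hn (show m + n = N + k by omega)
        (X.map (SimplexCategory.δ (⟨i, by omega⟩ : Fin (m + 2))).op A) B h
  /-- `(A ∘_k B)∂_i = A ∘_k B∂_{i-m+k}` for `i > m` (here `B` is an `(n+1)`-simplex). -/
  comp_delta_high : ∀ {m n k N : ℕ} (hm : k ≤ m) (hn : k ≤ n + 1)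
    (hN : m + (n + 1) = (N + 1) + k)
    (i : ℕ) (hi1 : m < i) (hi2 : i ≤ N + 1)
    (A : X.obj (op (sobj m))) (B : X.obj (op (sobj (n + 1))))
    (hAB : X.map (tgtHom k m hm).op A = X.map (srcHom k (n + 1) hn).op B)
    (h : X.map (tgtHom k m hm).op A
      = X.map (srcHom k n (by omega)).op
        (X.map (SimplexCategory.δ (⟨i - m + k, by omega⟩ : Fin (n + 2))).op B)),
    X.map (SimplexCategory.δ (⟨i, by omega⟩ : Fin (N + 2))).op (comp hm hn hN A B hAB)
    = comp hm (show k ≤ n by omega) (show m + n = N + k by omega)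
        A (X.map (SimplexCategory.δ (⟨i - m + k, by omega⟩ : Fin (n + 2))).op B) h

end Compo

/-!
The source of `A ∘_k B` is peeled off one vertex at a time: the last face of `A ∘_k B` is
`A ∘_k B∂_n` (compatibility with `∂_i` for `i > m`), which lowers `n` by one while keeping
`A` and `k`, until `n = k`; then `B = At_k` and the identity axiom `A ∘_k At_k = A` applies.
Dually, the first face is `A∂_0 ∘_k B`, and the induction ends with `Bs_k ∘_k B = B`.
-/

namespace Compo

lemma srcHom_self (n : ℕ) (h : n ≤ n) : srcHom n n h = 𝟙 (sobj n) := by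
  ext v
  rfl

lemma tgtHom_self (n : ℕ) (h : n ≤ n) : tgtHom n n h = 𝟙 (sobj n) := by
  ext v
  simp [tgtHom]

lemma srcHom_comp_δ_last (k n : ℕ) (h : k ≤ n) :
    srcHom k n h ≫ SimplexCategory.δ (Fin.last (n + 1)) = srcHom k (n + 1) (by omega) := by
  ext v
  simp [srcHom, SimplexCategory.δ]
  rfl

lemma tgtHom_comp_δ_zero (k n : ℕ) (h : k ≤ n) :
    tgtHom k n h ≫ SimplexCategory.δ 0 = tgtHom k (n + 1) (by omega) := by
  ext v
  change v.1 + (n - k) + 1 = v.1 + (n + 1 - k)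
  omega

variable (𝒞 : Compository)

theorem map_srcHom_comp {m k : ℕ} (hm : k ≤ m) (A : 𝒞.X.obj (op (sobj m)))
    (n : ℕ) (hn : k ≤ n) :
    ∀ {N : ℕ} (hN : m + n = N + k) (B : 𝒞.X.obj (op (sobj n)))
      (hAB : 𝒞.X.map (tgtHom k m hm).op A = 𝒞.X.map (srcHom k n hn).op B),
      𝒞.X.map (srcHom m N (by omega)).op (𝒞.comp hm hn hN A B hAB) = A := by
  induction n, hn using Nat.le_induction with
  | base =>
    intro N hN B hAB
    obtain rfl : N = m := by omega
    obtain rfl : B = 𝒞.X.map (tgtHom k N hm).op A := by simpa [srcHom_self] using hAB.symm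
    simpa [srcHom_self] using 𝒞.id_right hm A hAB
  | succ n hn ih =>
    intro N hN B hAB
    obtain ⟨N, rfl⟩ : ∃ N', N = N' + 1 := ⟨m + n - k, by omega⟩
    have hlast : (⟨N + 1 - m + k, by omega⟩ : Fin (n + 2)) = Fin.last (n + 1) :=
      Fin.ext (by simp only [Fin.val_last]; omega)
    have hAB' : 𝒞.X.map (tgtHom k m hm).op A = 𝒞.X.map (srcHom k n hn).op
        (𝒞.X.map (SimplexCategory.δ (⟨N + 1 - m + k, by omega⟩ : Fin (n + 2))).op B) := by
      rw [hlast, hAB, ← Functor.map_comp_apply, ← op_comp, srcHom_comp_δ_last]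
    rw [← srcHom_comp_δ_last m N, op_comp, Functor.map_comp_apply, Fin.last,
      𝒞.comp_delta_high hm _ hN (N + 1) (by omega) le_rfl A B hAB hAB']
    exact ih (by omega) _ hAB'

theorem map_tgtHom_comp {n k : ℕ} (hn : k ≤ n) (B : 𝒞.X.obj (op (sobj n)))
    (m : ℕ) (hm : k ≤ m) :
    ∀ {N : ℕ} (hN : m + n = N + k) (A : 𝒞.X.obj (op (sobj m)))
      (hAB : 𝒞.X.map (tgtHom k m hm).op A = 𝒞.X.map (srcHom k n hn).op B),
      𝒞.X.map (tgtHom n N (by omega)).op (𝒞.comp hm hn hN A B hAB) = B := by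
  induction m, hm using Nat.le_induction with
  | base =>
    intro N hN A hAB
    obtain rfl : N = n := by omega
    obtain rfl : A = 𝒞.X.map (srcHom k N hn).op B := by simpa [tgtHom_self] using hAB
    simpa [tgtHom_self] using 𝒞.id_left hn B hAB
  | succ m hm ih =>
    intro N hN A hAB
    obtain ⟨N, rfl⟩ : ∃ N', N = N' + 1 := ⟨m + n - k, by omega⟩
    have hAB' : 𝒞.X.map (tgtHom k m hm).op (𝒞.X.map (SimplexCategory.δ 0).op A)
        = 𝒞.X.map (srcHom k n hn).op B := by
      rw [← hAB, ← Functor.map_comp_apply, ← op_comp, tgtHom_comp_δ_zero]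
    rw [← tgtHom_comp_δ_zero n N, op_comp, Functor.map_comp_apply, ← Fin.zero_eta,
      𝒞.comp_delta_low _ hn hN 0 (by omega) A B hAB hAB']
    exact ih (by omega) _ hAB'

end Compo

open Compo in
/-- source and target conditions in a compository:
`(A ∘_k B)s_m = A` and `(A ∘_k B)t_n = B`. -/
theorem compository_source_target (𝒞 : Compository) {m n k N : ℕ}
    (hm : k ≤ m) (hn : k ≤ n) (hN : m + n = N + k)
    (A : 𝒞.X.obj (op (sobj m))) (B : 𝒞.X.obj (op (sobj n)))
    (hAB : 𝒞.X.map (tgtHom k m hm).op A = 𝒞.X.map (srcHom k n hn).op B) :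
    𝒞.X.map (srcHom m N (by omega)).op (𝒞.comp hm hn hN A B hAB) = A ∧
    𝒞.X.map (tgtHom n N (by omega)).op (𝒞.comp hm hn hN A B hAB) = B :=
  ⟨map_srcHom_comp 𝒞 hm A n hn hN B hAB, map_tgtHom_comp 𝒞 hn B m hm hN A hAB⟩
end

section
/- The glued topology satisfies back-and-forth: for $A' \subseteq A$ with $A' \cup B = A \cup B = C$ and compatible topologies $\tau_{A'}, \tau_B$, one has $g(\tau_{A'}, \tau_B) = g\big(g(\tau_{A'}, \tau_B)|_A,\ \tau_B\big)$, where $|_A$ denotes the subspace topology on $A$. -/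
/-- A topology on a subset `A` of `X`, given as the collection of its open sets
(subsets of `A`). -/
def IsTopologyOn {X : Type} (A : Set X) (τ : Set (Set X)) : Prop :=
  (∀ U ∈ τ, U ⊆ A) ∧ (∅ ∈ τ) ∧ (A ∈ τ) ∧
  (∀ S ⊆ τ, ⋃₀ S ∈ τ) ∧ (∀ U ∈ τ, ∀ V ∈ τ, U ∩ V ∈ τ)

/-- The subspace topology induced on `S`. -/
def subspaceTop {X : Type} (τ : Set (Set X)) (S : Set X) : Set (Set X) :=
  (· ∩ S) '' τ

/-- The glued topology on `A ∪ B`: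
`g(τ_A, τ_B) = {U ⊆ A ∪ B ∣ U ∩ A ∈ τ_A, U ∩ B ∈ τ_B}`. -/
def glueTop {X : Type} (A B : Set X) (τA τB : Set (Set X)) : Set (Set X) :=
  {U | U ⊆ A ∪ B ∧ U ∩ A ∈ τA ∧ U ∩ B ∈ τB}

theorem mem_subspaceTop_of_mem {X : Type} {τ : Set (Set X)} {U : Set X} (S : Set X)
    (hU : U ∈ τ) : U ∩ S ∈ subspaceTop τ S :=
  Set.mem_image_of_mem _ hU

theorem inter_mem_of_mem_subspaceTop_glueTop {X : Type} {A' A B : Set X} {τA' τB : Set (Set X)}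
    (hA'A : A' ⊆ A) {V : Set X} (hV : V ∈ subspaceTop (glueTop A' B τA' τB) A) :
    V ∩ A' ∈ τA' := by
  obtain ⟨W, ⟨-, hWA', -⟩, rfl⟩ := hV
  rwa [Set.inter_assoc, Set.inter_eq_right.mpr hA'A]

theorem glueTop_back_and_forth_general {X : Type} (A' A B : Set X)
    (τA' τB : Set (Set X))
    (hA'A : A' ⊆ A) (hUnion : A' ∪ B = A ∪ B) :
    glueTop A' B τA' τB
      = glueTop A B (subspaceTop (glueTop A' B τA' τB) A) τB := by
  ext U
  constructor
  · intro hU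
    exact ⟨hUnion ▸ hU.1, mem_subspaceTop_of_mem A hU, hU.2.2⟩
  · rintro ⟨hsub, hUA, hUB⟩
    have hUA' : U ∩ A ∩ A' = U ∩ A' := by
      rw [Set.inter_assoc, Set.inter_eq_right.mpr hA'A]
    exact ⟨hUnion ▸ hsub, hUA' ▸ inter_mem_of_mem_subspaceTop_glueTop hA'A hUA, hUB⟩

/-- back-and-forth for glued topologies: for `A' ⊆ A` with
`A' ∪ B = A ∪ B` and compatible topologies,
`g(τ_{A'}, τ_B) = g(g(τ_{A'}, τ_B)|_A, τ_B)`. -/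
theorem glueTop_back_and_forth {X : Type} (A' A B : Set X)
    (τA' τB : Set (Set X))
    (hA'A : A' ⊆ A) (hUnion : A' ∪ B = A ∪ B)
    (hA' : IsTopologyOn A' τA') (hB : IsTopologyOn B τB)
    (hcompat : subspaceTop τA' (A' ∩ B) = subspaceTop τB (A' ∩ B)) :
    glueTop A' B τA' τB
      = glueTop A B (subspaceTop (glueTop A' B τA' τB) A) τB :=
  glueTop_back_and_forth_general A' A B τA' τB hA'A hUnion
end
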